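/- arXiv:2309.03084 — 7 statements merged into one kernel-verified Lean document; each statement's English description precedes it below -/
import Mathlib

section
/- Let A, B be finite nonempty action sets, u : A × B → ℝ a payoff matrix, and R̄ : A → ℝ any vector. Suppose a* ∈ A attains the maximum of R̄ and R̄(a*) > 0, and let R̄^max : A → ℝ be the vector equal to R̄(a*) at a* and 0 at every other coordinate. Then the pure strategy e_{a*} forces the halfspace H = {z : A → ℝ | ⟨R̄^max, z⟩ ≤ 0}: for every opponent strategy y ∈ Δ(B), the instantaneous regret vector r(a) = U(e_a, y) − U(e_{a*}, y) satisfies ⟨R̄^max, r⟩ = 0, hence r ∈ H; moreover H contains the entire nonpositive orthant {z | z(a) ≤ 0 for all a ∈ A}. -/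
open Finset

/-- Mixed strategies: the standard simplex. -/
def IsMixed {A : Type*} [Fintype A] (x : A → ℝ) : Prop :=
  (∀ a, 0 ≤ x a) ∧ ∑ a, x a = 1

/-- Bilinear expected payoff. -/
def payoff {A B : Type*} [Fintype A] [Fintype B] (u : A × B → ℝ)
    (x : A → ℝ) (y : B → ℝ) : ℝ :=
  ∑ a, ∑ b, x a * y b * u (a, b)

/-- Pure strategy putting mass 1 on `a`. -/
def pureStrat {A : Type*} [DecidableEq A] (a : A) : A → ℝ :=
  fun a' => if a' = a then 1 else 0

theorem best_response_forces_halfspace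
    {A B : Type*} [Fintype A] [Fintype B] [Nonempty A] [Nonempty B]
    [DecidableEq A]
    (u : A × B → ℝ) (Rbar : A → ℝ) (aStar : A)
    (hmax : ∀ a, Rbar a ≤ Rbar aStar) (hpos : 0 < Rbar aStar)
    (Rmax : A → ℝ) (hRmax : ∀ a, Rmax a = if a = aStar then Rbar aStar else 0) :
    (∀ y : B → ℝ, IsMixed y →
      (∑ a, Rmax a *
          (payoff u (pureStrat a) y - payoff u (pureStrat aStar) y) = 0) ∧
      (∑ a, Rmax a *
          (payoff u (pureStrat a) y - payoff u (pureStrat aStar) y) ≤ 0)) ∧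
    (∀ z : A → ℝ, (∀ a, z a ≤ 0) → ∑ a, Rmax a * z a ≤ 0) := by
  have hsum : ∀ f : A → ℝ, ∑ a, Rmax a * f a = Rbar aStar * f aStar := by
    intro f
    rw [Finset.sum_eq_single aStar]
    · rw [hRmax]; simp
    · intro b _ hb; rw [hRmax]; simp [hb]
    · simp
  constructor
  · intro y _
    have h0 : ∑ a, Rmax a *
        (payoff u (pureStrat a) y - payoff u (pureStrat aStar) y) = 0 := by
      rw [hsum]; ring
    exact ⟨h0, le_of_eq h0⟩
  · intro z hz
    rw [hsum]
    exact mul_nonpos_of_nonneg_of_nonpos hpos.le (hz aStar)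
end

section
/- Let A, B be finite nonempty action sets, u : A × B → ℝ a payoff matrix of a two-player zero-sum game (player 1 receives U(x,y), player 2 receives −U(x,y)), T ≥ 1, and x_1, …, x_T ∈ Δ(A), y_1, …, y_T ∈ Δ(B) strategy sequences with averages x̄_T = (1/T)Σ_t x_t and ȳ_T = (1/T)Σ_t y_t. Then the total exploitability of the average strategy profile equals the sum of the two players' maximum average regrets: (max_{a∈A} U(e_a, ȳ_T) − U(x̄_T, ȳ_T)) + (max_{b∈B} (−U(x̄_T, e_b)) − (−U(x̄_T, ȳ_T))) = max_{a∈A} R̄¹_T(a) + max_{b∈B} R̄²_T(b). -/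
open Finset

private lemma sum_swap_aux {A B : Type*} [Fintype A] [Fintype B] (u : A × B → ℝ) (w : A → ℝ)
    (y : ℕ → B → ℝ) (c : ℝ) (s : Finset ℕ) :
    ∑ a, ∑ b, w a * (c * ∑ t ∈ s, y t b) * u (a,b)
      = c * ∑ t ∈ s, ∑ a, ∑ b, w a * y t b * u (a,b) := by
  simp only [Finset.mul_sum, Finset.sum_mul]
  calc ∑ a, ∑ b, ∑ t ∈ s, w a * (c * y t b) * u (a,b)
      = ∑ a, ∑ t ∈ s, ∑ b, w a * (c * y t b) * u (a,b) := by
        exact Finset.sum_congr rfl fun a _ => Finset.sum_comm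
    _ = ∑ t ∈ s, ∑ a, ∑ b, w a * (c * y t b) * u (a,b) := Finset.sum_comm
    _ = ∑ t ∈ s, ∑ a, ∑ b, c * (w a * y t b * u (a,b)) := by
        refine Finset.sum_congr rfl fun t _ => Finset.sum_congr rfl fun a _ =>
          Finset.sum_congr rfl fun b _ => by ring

private lemma sum_swap_aux_left {A B : Type*} [Fintype A] [Fintype B] (u : A × B → ℝ)
    (v : B → ℝ) (x : ℕ → A → ℝ) (c : ℝ) (s : Finset ℕ) :
    ∑ a, ∑ b, (c * ∑ t ∈ s, x t a) * v b * u (a,b)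
      = c * ∑ t ∈ s, ∑ a, ∑ b, x t a * v b * u (a,b) := by
  simp only [Finset.mul_sum, Finset.sum_mul]
  calc ∑ a, ∑ b, ∑ t ∈ s, c * x t a * v b * u (a,b)
      = ∑ a, ∑ t ∈ s, ∑ b, c * x t a * v b * u (a,b) := by
        exact Finset.sum_congr rfl fun a _ => Finset.sum_comm
    _ = ∑ t ∈ s, ∑ a, ∑ b, c * x t a * v b * u (a,b) := Finset.sum_comm
    _ = ∑ t ∈ s, ∑ a, ∑ b, c * (x t a * v b * u (a,b)) := by
        refine Finset.sum_congr rfl fun t _ => Finset.sum_congr rfl fun a _ =>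
          Finset.sum_congr rfl fun b _ => by ring

theorem total_exploitability_eq_sum_max_avg_regrets
    {A B : Type*} [Fintype A] [Fintype B] [Nonempty A] [Nonempty B]
    [DecidableEq A] [DecidableEq B]
    (u : A × B → ℝ) (T : ℕ) (hT : 1 ≤ T)
    (x : ℕ → A → ℝ) (hx : ∀ t ∈ Finset.Icc 1 T, IsMixed (x t))
    (y : ℕ → B → ℝ) (hy : ∀ t ∈ Finset.Icc 1 T, IsMixed (y t))
    (xbar : A → ℝ) (hxbar : ∀ a, xbar a = (1 / (T : ℝ)) * ∑ t ∈ Finset.Icc 1 T, x t a)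
    (ybar : B → ℝ) (hybar : ∀ b, ybar b = (1 / (T : ℝ)) * ∑ t ∈ Finset.Icc 1 T, y t b)
    (R1 : A → ℝ)
    (hR1 : ∀ a, R1 a = (1 / (T : ℝ)) * ∑ t ∈ Finset.Icc 1 T,
        (payoff u (pureStrat a) (y t) - payoff u (x t) (y t)))
    (R2 : B → ℝ)
    (hR2 : ∀ b, R2 b = (1 / (T : ℝ)) * ∑ t ∈ Finset.Icc 1 T,
        (-(payoff u (x t) (pureStrat b)) - -(payoff u (x t) (y t)))) :
    (Finset.univ.sup' Finset.univ_nonempty (fun a => payoff u (pureStrat a) ybar)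
        - payoff u xbar ybar)
      + (Finset.univ.sup' Finset.univ_nonempty (fun b => -(payoff u xbar (pureStrat b)))
        - -(payoff u xbar ybar))
    = Finset.univ.sup' Finset.univ_nonempty R1
      + Finset.univ.sup' Finset.univ_nonempty R2 := by
  set S : ℝ := (1 / (T : ℝ)) * ∑ t ∈ Finset.Icc 1 T, payoff u (x t) (y t) with hS
  -- linearity in the second argument
  have hlinR : ∀ w : A → ℝ, payoff u w ybar
      = (1 / (T : ℝ)) * ∑ t ∈ Finset.Icc 1 T, payoff u w (y t) := by
    intro w
    simp only [payoff, hybar]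
    exact sum_swap_aux u w y _ _
  have hlinL : ∀ v : B → ℝ, payoff u xbar v
      = (1 / (T : ℝ)) * ∑ t ∈ Finset.Icc 1 T, payoff u (x t) v := by
    intro v
    simp only [payoff, hxbar]
    exact sum_swap_aux_left u v x _ _
  have hR1' : ∀ a, R1 a = payoff u (pureStrat a) ybar - S := by
    intro a
    rw [hR1, Finset.sum_sub_distrib, mul_sub, hlinR, hS]
  have hR2' : ∀ b, R2 b = -(payoff u xbar (pureStrat b)) + S := by
    intro b
    rw [hR2, Finset.sum_sub_distrib, Finset.sum_neg_distrib, Finset.sum_neg_distrib,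
      hlinL, hS]
    ring
  have hsub : ∀ c : ℝ, Finset.univ.sup' Finset.univ_nonempty (fun a : A => payoff u (pureStrat a) ybar - c)
      = Finset.univ.sup' Finset.univ_nonempty (fun a : A => payoff u (pureStrat a) ybar) - c := by
    intro c
    exact (Finset.comp_sup'_eq_sup'_comp _ (fun z => z - c)
      (fun z w => (max_sub_sub_right z w c).symm)).symm
  have hadd : ∀ c : ℝ, Finset.univ.sup' Finset.univ_nonempty (fun b : B => -(payoff u xbar (pureStrat b)) + c)
      = Finset.univ.sup' Finset.univ_nonempty (fun b : B => -(payoff u xbar (pureStrat b))) + c := by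
    intro c
    exact (Finset.comp_sup'_eq_sup'_comp _ (fun z => z + c)
      (fun z w => (max_add_add_right z w c).symm)).symm
  have e1 : Finset.univ.sup' Finset.univ_nonempty R1
      = Finset.univ.sup' Finset.univ_nonempty (fun a : A => payoff u (pureStrat a) ybar) - S := by
    rw [← hsub]; exact Finset.sup'_congr _ rfl fun a _ => hR1' a
  have e2 : Finset.univ.sup' Finset.univ_nonempty R2
      = Finset.univ.sup' Finset.univ_nonempty (fun b : B => -(payoff u xbar (pureStrat b))) + S := by
    rw [← hadd]; exact Finset.sup'_congr _ rfl fun b _ => hR2' b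
  rw [e1, e2]
  ring
end

section
/- Let A, B be finite nonempty action sets and u : A × B → ℝ the payoff matrix of a two-player zero-sum game. Let x_t ∈ Δ(A) and y_t ∈ Δ(B) (t = 1, 2, …) be strategy sequences with averages x̄_T = (1/T)Σ_{t=1}^T x_t and ȳ_T = (1/T)Σ_{t=1}^T y_t. If max_{a∈A} R̄¹_T(a) → 0 and max_{b∈B} R̄²_T(b) → 0 as T → ∞, then the total exploitability ε_T = (max_{a∈A} U(e_a, ȳ_T) − U(x̄_T, ȳ_T)) + (max_{b∈B} (−U(x̄_T, e_b)) + U(x̄_T, ȳ_T)) converges to 0 as T → ∞; that is, the average strategy profile (x̄_T, ȳ_T) converges to a Nash equilibrium in the sense of vanishing exploitability. -/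
open Finset Filter

lemma payoff_avg_right {A B : Type*} [Fintype A] [Fintype B] (u : A × B → ℝ)
    (x : A → ℝ) (c : ℝ) (s : Finset ℕ) (ys : ℕ → B → ℝ) :
    payoff u x (fun b => c * ∑ t ∈ s, ys t b) = c * ∑ t ∈ s, payoff u x (ys t) := by
  simp only [payoff, Finset.mul_sum, Finset.sum_mul]
  refine Eq.trans (Finset.sum_congr rfl fun a _ => Finset.sum_comm) ?_
  rw [Finset.sum_comm]
  refine Finset.sum_congr rfl fun t _ => Finset.sum_congr rfl fun a _ =>
    Finset.sum_congr rfl fun b _ => by ring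

lemma payoff_avg_left {A B : Type*} [Fintype A] [Fintype B] (u : A × B → ℝ)
    (y : B → ℝ) (c : ℝ) (s : Finset ℕ) (xs : ℕ → A → ℝ) :
    payoff u (fun a => c * ∑ t ∈ s, xs t a) y = c * ∑ t ∈ s, payoff u (xs t) y := by
  simp only [payoff, Finset.mul_sum, Finset.sum_mul]
  refine Eq.trans (Finset.sum_congr rfl fun a _ => Finset.sum_comm) ?_
  rw [Finset.sum_comm]
  refine Finset.sum_congr rfl fun t _ => Finset.sum_congr rfl fun a _ =>
    Finset.sum_congr rfl fun b _ => by ring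

theorem vanishing_regret_implies_vanishing_exploitability
    {A B : Type*} [Fintype A] [Fintype B] [Nonempty A] [Nonempty B]
    [DecidableEq A] [DecidableEq B]
    (u : A × B → ℝ)
    (x : ℕ → A → ℝ) (hx : ∀ t, 1 ≤ t → IsMixed (x t))
    (y : ℕ → B → ℝ) (hy : ∀ t, 1 ≤ t → IsMixed (y t))
    (xbar : ℕ → A → ℝ)
    (hxbar : ∀ T, ∀ a, xbar T a = (1 / (T : ℝ)) * ∑ t ∈ Finset.Icc 1 T, x t a)
    (ybar : ℕ → B → ℝ)
    (hybar : ∀ T, ∀ b, ybar T b = (1 / (T : ℝ)) * ∑ t ∈ Finset.Icc 1 T, y t b)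
    (R1 : ℕ → A → ℝ)
    (hR1 : ∀ T, ∀ a, R1 T a = (1 / (T : ℝ)) * ∑ t ∈ Finset.Icc 1 T,
        (payoff u (pureStrat a) (y t) - payoff u (x t) (y t)))
    (R2 : ℕ → B → ℝ)
    (hR2 : ∀ T, ∀ b, R2 T b = (1 / (T : ℝ)) * ∑ t ∈ Finset.Icc 1 T,
        (-(payoff u (x t) (pureStrat b)) + payoff u (x t) (y t)))
    (h1 : Tendsto (fun T => Finset.univ.sup' Finset.univ_nonempty (R1 T)) atTop (nhds 0))
    (h2 : Tendsto (fun T => Finset.univ.sup' Finset.univ_nonempty (R2 T)) atTop (nhds 0)) :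
    Tendsto (fun T =>
      (Finset.univ.sup' Finset.univ_nonempty
          (fun a => payoff u (pureStrat a) (ybar T)) - payoff u (xbar T) (ybar T))
      + (Finset.univ.sup' Finset.univ_nonempty
          (fun b => -(payoff u (xbar T) (pureStrat b))) + payoff u (xbar T) (ybar T)))
      atTop (nhds 0) := by
  have key : ∀ T : ℕ,
      (Finset.univ.sup' Finset.univ_nonempty
          (fun a => payoff u (pureStrat a) (ybar T)) - payoff u (xbar T) (ybar T))
      + (Finset.univ.sup' Finset.univ_nonempty
          (fun b => -(payoff u (xbar T) (pureStrat b))) + payoff u (xbar T) (ybar T))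
      = (Finset.univ.sup' Finset.univ_nonempty (R1 T))
        + (Finset.univ.sup' Finset.univ_nonempty (R2 T)) := by
    intro T
    set C : ℝ := (1 / (T : ℝ)) * ∑ t ∈ Finset.Icc 1 T, payoff u (x t) (y t) with hC
    have hyb : ybar T = fun b => (1 / (T : ℝ)) * ∑ t ∈ Finset.Icc 1 T, y t b :=
      funext fun b => hybar T b
    have hxb : xbar T = fun a => (1 / (T : ℝ)) * ∑ t ∈ Finset.Icc 1 T, x t a :=
      funext fun a => hxbar T a
    have e1 : ∀ a, R1 T a = payoff u (pureStrat a) (ybar T) - C := by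
      intro a
      rw [hR1, Finset.sum_sub_distrib, mul_sub, hyb, payoff_avg_right, hC]
    have e2 : ∀ b, R2 T b = -(payoff u (xbar T) (pureStrat b)) + C := by
      intro b
      rw [hR2, Finset.sum_add_distrib, mul_add, Finset.sum_neg_distrib, mul_neg,
        hxb, payoff_avg_left, hC]
    have s1 : Finset.univ.sup' Finset.univ_nonempty (R1 T)
        = Finset.univ.sup' Finset.univ_nonempty
            (fun a => payoff u (pureStrat a) (ybar T)) - C := by
      rw [Finset.sup'_congr Finset.univ_nonempty rfl (fun a _ => e1 a)]
      exact (Finset.comp_sup'_eq_sup'_comp Finset.univ_nonempty (fun r => r - C)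
        (fun p q => by simp [max_sub_sub_right])).symm
    have s2 : Finset.univ.sup' Finset.univ_nonempty (R2 T)
        = Finset.univ.sup' Finset.univ_nonempty
            (fun b => -(payoff u (xbar T) (pureStrat b))) + C := by
      rw [Finset.sup'_congr Finset.univ_nonempty rfl (fun b _ => e2 b)]
      exact (Finset.comp_sup'_eq_sup'_comp Finset.univ_nonempty (fun r => r + C)
        (fun p q => by simp [max_add_add_right])).symm
    rw [s1, s2]; ring
  have := h1.add h2
  rw [add_zero] at this
  simpa only [key] using this
end

section
/- Let A be a finite nonempty index set and let r_1, …, r_T : A → ℝ be vectors such that ‖r_t‖₂ ≤ B for every t and such that ⟨(Σ_{s=1}^{t−1} r_s)⁺, r_t⟩ ≤ 0 for every t = 1, …, T, where (·)⁺ denotes the componentwise positive part. Then ‖((1/T)·Σ_{t=1}^T r_t)⁺‖₂ ≤ B/√T; in particular, if additionally |r_t(a)| ≤ L for all t and a (so one may take B = L·√|A|), then max_{a ∈ A} (1/T)·Σ_{t=1}^T r_t(a) ≤ L·√(|A|/T). -/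
open Finset

private lemma pointwise_sq (x y : ℝ) :
    (max (x + y) 0) ^ 2 ≤ (max x 0) ^ 2 + 2 * (max x 0) * y + y ^ 2 := by
  have h : (max x 0) ^ 2 + 2 * (max x 0) * y + y ^ 2 = (max x 0 + y) ^ 2 := by ring
  rw [h]
  rcases le_or_gt (x + y) 0 with h1 | h1
  · rw [max_eq_right h1]; simpa using sq_nonneg (max x 0 + y)
  · rw [max_eq_left h1.le]
    have hx : x ≤ max x 0 := le_max_left _ _
    nlinarith [le_max_right x 0]

private lemma key_sq {A : Type*} [Fintype A]
    (T : ℕ) (r : ℕ → A → ℝ) (B : ℝ)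
    (hB : ∀ t ∈ Finset.Icc 1 T, ∑ a, (r t a) ^ 2 ≤ B ^ 2)
    (hforce : ∀ t ∈ Finset.Icc 1 T,
      ∑ a, (max (∑ s ∈ Finset.Icc 1 (t - 1), r s a) 0) * r t a ≤ 0) :
    ∀ t ≤ T, ∑ a, (max (∑ s ∈ Finset.Icc 1 t, r s a) 0) ^ 2 ≤ t * B ^ 2 := by
  intro t
  induction t with
  | zero => intro _; simp
  | succ n ih =>
    intro hle
    have hn := ih (le_trans (Nat.le_succ n) hle)
    have hmem : n + 1 ∈ Finset.Icc 1 T := by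
      simp [Nat.succ_le_iff]; omega
    have hsum : ∀ a, ∑ s ∈ Finset.Icc 1 (n + 1), r s a
        = (∑ s ∈ Finset.Icc 1 n, r s a) + r (n + 1) a := by
      intro a
      rw [Finset.sum_Icc_succ_top (by omega)]
    calc ∑ a, (max (∑ s ∈ Finset.Icc 1 (n + 1), r s a) 0) ^ 2
        ≤ ∑ a, ((max (∑ s ∈ Finset.Icc 1 n, r s a) 0) ^ 2
            + 2 * (max (∑ s ∈ Finset.Icc 1 n, r s a) 0) * r (n + 1) a
            + (r (n + 1) a) ^ 2) := by
          apply Finset.sum_le_sum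
          intro a _
          rw [hsum a]
          exact pointwise_sq _ _
      _ = (∑ a, (max (∑ s ∈ Finset.Icc 1 n, r s a) 0) ^ 2)
            + 2 * (∑ a, (max (∑ s ∈ Finset.Icc 1 n, r s a) 0) * r (n + 1) a)
            + ∑ a, (r (n + 1) a) ^ 2 := by
          rw [Finset.sum_add_distrib, Finset.sum_add_distrib, Finset.mul_sum]
          ring_nf
      _ ≤ n * B ^ 2 + 2 * 0 + B ^ 2 := by
          have hf := hforce (n + 1) hmem
          simp only [Nat.add_sub_cancel] at hf
          have hb := hB (n + 1) hmem
          gcongr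
      _ = ((n + 1 : ℕ) : ℝ) * B ^ 2 := by push_cast; ring

theorem blackwell_approachability_bound
    {A : Type*} [Fintype A] [Nonempty A]
    (T : ℕ) (hT : 1 ≤ T) (r : ℕ → A → ℝ) (B : ℝ)
    (hB : ∀ t ∈ Finset.Icc 1 T, Real.sqrt (∑ a, (r t a) ^ 2) ≤ B)
    (hforce : ∀ t ∈ Finset.Icc 1 T,
      ∑ a, (max (∑ s ∈ Finset.Icc 1 (t - 1), r s a) 0) * r t a ≤ 0) :
    Real.sqrt (∑ a, (max ((1 / (T : ℝ)) * ∑ t ∈ Finset.Icc 1 T, r t a) 0) ^ 2)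
      ≤ B / Real.sqrt T ∧
    (∀ L : ℝ, (∀ t ∈ Finset.Icc 1 T, ∀ a, |r t a| ≤ L) →
      Finset.univ.sup' Finset.univ_nonempty
          (fun a => (1 / (T : ℝ)) * ∑ t ∈ Finset.Icc 1 T, r t a)
        ≤ L * Real.sqrt ((Fintype.card A : ℝ) / T)) := by
  have hTpos : (0 : ℝ) < T := by exact_mod_cast hT
  -- general bound for any valid norm bound B'
  have main : ∀ B' : ℝ, 0 ≤ B' →
      (∀ t ∈ Finset.Icc 1 T, Real.sqrt (∑ a, (r t a) ^ 2) ≤ B') →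
      Real.sqrt (∑ a, (max ((1 / (T : ℝ)) * ∑ t ∈ Finset.Icc 1 T, r t a) 0) ^ 2)
        ≤ B' / Real.sqrt T := by
    intro B' hB'0 hB'
    have hsq : ∀ t ∈ Finset.Icc 1 T, ∑ a, (r t a) ^ 2 ≤ B' ^ 2 := by
      intro t ht
      have h1 := hB' t ht
      have h2 : (0:ℝ) ≤ ∑ a, (r t a) ^ 2 := by positivity
      nlinarith [Real.sq_sqrt h2, Real.sqrt_nonneg (∑ a, (r t a) ^ 2)]
    have hkey := key_sq T r B' hsq hforce T le_rfl
    have hscale : ∀ a, max ((1 / (T : ℝ)) * ∑ t ∈ Finset.Icc 1 T, r t a) 0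
        = (1 / (T : ℝ)) * max (∑ t ∈ Finset.Icc 1 T, r t a) 0 := by
      intro a
      rw [mul_max_of_nonneg _ _ (by positivity : (0:ℝ) ≤ 1 / T), mul_zero]
    have hsum : ∑ a, (max ((1 / (T : ℝ)) * ∑ t ∈ Finset.Icc 1 T, r t a) 0) ^ 2
        ≤ B' ^ 2 / T := by
      calc ∑ a, (max ((1 / (T : ℝ)) * ∑ t ∈ Finset.Icc 1 T, r t a) 0) ^ 2
          = (1 / (T:ℝ)) ^ 2 * ∑ a, (max (∑ t ∈ Finset.Icc 1 T, r t a) 0) ^ 2 := by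
            rw [Finset.mul_sum]
            exact Finset.sum_congr rfl fun a _ => by rw [hscale a]; ring
        _ ≤ (1 / (T:ℝ)) ^ 2 * (T * B' ^ 2) := by gcongr
        _ = B' ^ 2 / T := by field_simp
    calc Real.sqrt (∑ a, (max ((1 / (T : ℝ)) * ∑ t ∈ Finset.Icc 1 T, r t a) 0) ^ 2)
        ≤ Real.sqrt (B' ^ 2 / T) := Real.sqrt_le_sqrt hsum
      _ = B' / Real.sqrt T := by
          rw [Real.sqrt_div (by positivity), Real.sqrt_sq hB'0]
  constructor
  · exact main B (le_trans (Real.sqrt_nonneg _) (hB 1 (by simp [hT]))) hB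
  · intro L hL
    have hL0 : 0 ≤ L := le_trans (abs_nonneg _) (hL 1 (by simp [hT]) Classical.ofNonempty)
    have hB' : ∀ t ∈ Finset.Icc 1 T, Real.sqrt (∑ a, (r t a) ^ 2)
        ≤ L * Real.sqrt (Fintype.card A) := by
      intro t ht
      have : ∑ a, (r t a) ^ 2 ≤ ∑ _a : A, L ^ 2 := by
        apply Finset.sum_le_sum
        intro a _
        exact sq_le_sq' (neg_le_of_abs_le (hL t ht a)) (le_of_abs_le (hL t ht a))
      calc Real.sqrt (∑ a, (r t a) ^ 2) ≤ Real.sqrt (∑ _a : A, L ^ 2) :=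
            Real.sqrt_le_sqrt this
        _ = L * Real.sqrt (Fintype.card A) := by
            rw [Finset.sum_const, Finset.card_univ, nsmul_eq_mul,
              Real.sqrt_mul (by positivity), Real.sqrt_sq hL0]
            ring
    have hmain := main (L * Real.sqrt (Fintype.card A)) (by positivity) hB'
    rw [Finset.sup'_le_iff]
    intro a _
    have h1 : (1 / (T : ℝ)) * ∑ t ∈ Finset.Icc 1 T, r t a
        ≤ max ((1 / (T : ℝ)) * ∑ t ∈ Finset.Icc 1 T, r t a) 0 := le_max_left _ _
    have h2 : max ((1 / (T : ℝ)) * ∑ t ∈ Finset.Icc 1 T, r t a) 0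
        ≤ Real.sqrt (∑ a, (max ((1 / (T : ℝ)) * ∑ t ∈ Finset.Icc 1 T, r t a) 0) ^ 2) := by
      have h3 : (max ((1 / (T : ℝ)) * ∑ t ∈ Finset.Icc 1 T, r t a) 0) ^ 2
          ≤ ∑ a, (max ((1 / (T : ℝ)) * ∑ t ∈ Finset.Icc 1 T, r t a) 0) ^ 2 :=
        Finset.single_le_sum
          (f := fun b => (max ((1 / (T : ℝ)) * ∑ t ∈ Finset.Icc 1 T, r t b) 0) ^ 2)
          (fun b _ => by positivity) (Finset.mem_univ a)
      calc max ((1 / (T : ℝ)) * ∑ t ∈ Finset.Icc 1 T, r t a) 0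
          = Real.sqrt ((max ((1 / (T : ℝ)) * ∑ t ∈ Finset.Icc 1 T, r t a) 0) ^ 2) :=
            (Real.sqrt_sq (le_max_right _ _)).symm
        _ ≤ _ := Real.sqrt_le_sqrt h3
    have h4 : L * Real.sqrt (Fintype.card A) / Real.sqrt T
        = L * Real.sqrt ((Fintype.card A : ℝ) / T) := by
      rw [Real.sqrt_div (by positivity)]
      ring
    linarith [le_trans (le_trans h1 h2) hmain]
end

section
/- Let A be a finite nonempty index set and x : A → ℝ a vector with max_{a∈A} x(a) > 0, let a* be a coordinate attaining this maximum, let x^max : A → ℝ be the vector equal to x(a*) at a* and 0 at every other coordinate, and let x⁺ be the componentwise positive part of x. Then ‖x − x⁺‖₂ ≤ √|A| · ‖x − x^max‖₂; that is, the distance from the regret vector to its regret-matching convergence point ψ^RM = x − x⁺ is at most √|A| times the distance to its fictitious-play convergence point ψ = x − x^max. -/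
open Finset

theorem dist_to_rm_point_le_sqrt_card_mul_dist_to_fp_point
    {A : Type*} [Fintype A] [Nonempty A] [DecidableEq A]
    (x : A → ℝ) (aStar : A)
    (hmax : ∀ a, x a ≤ x aStar) (hpos : 0 < x aStar)
    (xmax : A → ℝ) (hxmax : ∀ a, xmax a = if a = aStar then x aStar else 0)
    (xplus : A → ℝ) (hxplus : ∀ a, xplus a = max (x a) 0) :
    Real.sqrt (∑ a, (x a - xplus a) ^ 2)
      ≤ Real.sqrt (Fintype.card A) * Real.sqrt (∑ a, (x a - xmax a) ^ 2) := by
  have hterm : ∀ a, (x a - xplus a) ^ 2 ≤ (x a - xmax a) ^ 2 := by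
    intro a
    rw [hxplus, hxmax]
    by_cases h : a = aStar
    · subst h
      rw [if_pos rfl, max_eq_left hpos.le]
    · rw [if_neg h]
      rcases le_or_gt 0 (x a) with h0 | h0
      · rw [max_eq_left h0]; simp [sq_nonneg]
      · rw [max_eq_right h0.le]
  have h1 : (∑ a, (x a - xplus a) ^ 2) ≤ ∑ a, (x a - xmax a) ^ 2 :=
    Finset.sum_le_sum fun a _ => hterm a
  have h2 : Real.sqrt (∑ a, (x a - xplus a) ^ 2) ≤ Real.sqrt (∑ a, (x a - xmax a) ^ 2) :=
    Real.sqrt_le_sqrt h1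
  have hcard : (1 : ℝ) ≤ Real.sqrt (Fintype.card A) := by
    rw [show (1:ℝ) = Real.sqrt 1 by simp]
    apply Real.sqrt_le_sqrt
    exact_mod_cast Fintype.card_pos
  calc Real.sqrt (∑ a, (x a - xplus a) ^ 2) ≤ Real.sqrt (∑ a, (x a - xmax a) ^ 2) := h2
    _ ≤ Real.sqrt (Fintype.card A) * Real.sqrt (∑ a, (x a - xmax a) ^ 2) := by
        nlinarith [Real.sqrt_nonneg (∑ a, (x a - xmax a) ^ 2)]
end

section
/- Let g ≥ 2 be an integer and define sequences b, y : ℕ≥1 → ℕ by b(1) = 0, y(1) = 0, and for h ≥ 1: b(h+1) = (g−1) + g·y(h) and y(h+1) = b(h). Then for every h ≥ 3, the number of nodes touched at level h, F_h(s_pass) = 1 + b(h) + y(h) = 1 + b(h) + b(h−1), equals 1 + (g−1)·Σ_{i=0}^{⌊(h−2)/2⌋} g^i + (g−1)·Σ_{i=0}^{⌊(h−3)/2⌋} g^i = g^{⌊h/2⌋} + g^{⌊(h−1)/2⌋} − 1. -/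
open Finset

lemma geom_nat_aux (g : ℕ) (hg : 1 ≤ g) :
    ∀ n : ℕ, (g - 1) * ∑ i ∈ Finset.range n, g ^ i + 1 = g ^ n := by
  intro n
  induction n with
  | zero => simp
  | succ n ih =>
    rw [Finset.sum_range_succ, Nat.mul_add, add_right_comm, ih]
    have h1 : 1 + (g - 1) = g := by omega
    calc g ^ n + (g - 1) * g ^ n = (1 + (g - 1)) * g ^ n := by ring
      _ = g * g ^ n := by rw [h1]
      _ = g ^ (n + 1) := by rw [pow_succ]; ring

lemma geom_nat (g : ℕ) (hg : 1 ≤ g) (n : ℕ) :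
    (g - 1) * ∑ i ∈ Finset.range n, g ^ i = g ^ n - 1 := by
  have := geom_nat_aux g hg n
  omega

theorem nodes_touched_per_level_formula
    (g : ℕ) (hg : 2 ≤ g) (b y : ℕ → ℕ)
    (hb1 : b 1 = 0) (hy1 : y 1 = 0)
    (hbrec : ∀ h : ℕ, 1 ≤ h → b (h + 1) = (g - 1) + g * y h)
    (hyrec : ∀ h : ℕ, 1 ≤ h → y (h + 1) = b h) :
    ∀ h : ℕ, 3 ≤ h →
      y h = b (h - 1) ∧
      1 + b h + y h =
        1 + (g - 1) * ∑ i ∈ Finset.range ((h - 2) / 2 + 1), g ^ i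
          + (g - 1) * ∑ i ∈ Finset.range ((h - 3) / 2 + 1), g ^ i ∧
      1 + b h + y h = g ^ (h / 2) + g ^ ((h - 1) / 2) - 1 := by
  -- closed form for b
  have bform : ∀ h : ℕ, 1 ≤ h → b h = g ^ (h / 2) - 1 := by
    intro h
    induction h using Nat.strong_induction_on with
    | _ h ih =>
      intro h1
      match h, h1 with
      | 1, _ => simpa using hb1
      | 2, _ =>
        have : b 2 = (g - 1) + g * y 1 := hbrec 1 le_rfl
        simp [this, hy1]
      | (m + 3), _ =>
        have hy : y (m + 2) = b (m + 1) := hyrec (m + 1) (by omega)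
        have hb : b (m + 3) = (g - 1) + g * y (m + 2) := hbrec (m + 2) (by omega)
        have ihb : b (m + 1) = g ^ ((m + 1) / 2) - 1 := ih (m + 1) (by omega) (by omega)
        rw [hb, hy, ihb]
        have hdiv : (m + 3) / 2 = (m + 1) / 2 + 1 := by omega
        rw [hdiv, pow_succ]
        set a := g ^ ((m + 1) / 2) with ha
        have h1a : 1 ≤ a := Nat.one_le_pow _ _ (by omega)
        have h2a : 1 ≤ a * g := by
          calc 1 ≤ 1 * 1 := le_rfl
            _ ≤ a * g := Nat.mul_le_mul h1a (by omega)
        zify [h1a, h2a, (show 1 ≤ g by omega)]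
        ring
  intro h hh
  have hy : y h = b (h - 1) := by
    have := hyrec (h - 1) (by omega)
    have h1 : h - 1 + 1 = h := by omega
    rwa [h1] at this
  have hbh : b h = g ^ (h / 2) - 1 := bform h (by omega)
  have hbh1 : b (h - 1) = g ^ ((h - 1) / 2) - 1 := bform (h - 1) (by omega)
  have p1 : 1 ≤ g ^ (h / 2) := Nat.one_le_pow _ _ (by omega)
  have p2 : 1 ≤ g ^ ((h - 1) / 2) := Nat.one_le_pow _ _ (by omega)
  refine ⟨hy, ?_, ?_⟩
  · have e1 : (h - 2) / 2 + 1 = h / 2 := by omega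
    have e2 : (h - 3) / 2 + 1 = (h - 1) / 2 := by omega
    rw [e1, e2, geom_nat g (by omega), geom_nat g (by omega), hy, hbh, hbh1]
  · rw [hy, hbh, hbh1]
    omega
end

section
/- For all integers g ≥ 2 and h ≥ 1, (g^h − 1)/(g − 1) ≤ (g^{⌊h/2⌋} + g^{⌊(h−1)/2⌋} − 1)²; that is, the total number of nodes of a g-ary game tree with h levels is at most the square of F_h(s_pass) = g^{⌊h/2⌋} + g^{⌊(h−1)/2⌋} − 1, the number of nodes CFVFP must touch. -/
open Finset

theorem total_nodes_le_sq_nodes_touched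
    (g h : ℕ) (hg : 2 ≤ g) (hh : 1 ≤ h) :
    (g ^ h - 1) / (g - 1) ≤ (g ^ (h / 2) + g ^ ((h - 1) / 2) - 1) ^ 2 := by
  rcases Nat.lt_or_ge h 2 with h2 | h2
  · interval_cases h
    simp [Nat.div_self (by omega : 0 < g - 1)]
  · have hab : h / 2 + (h - 1) / 2 = h - 1 := by omega
    have ha : 1 ≤ h / 2 := by omega
    have hx : g ≤ g ^ (h / 2) := by
      calc g = g ^ 1 := (pow_one g).symm
      _ ≤ g ^ (h / 2) := Nat.pow_le_pow_right (by omega) ha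
    have hy : 1 ≤ g ^ ((h - 1) / 2) := Nat.one_le_pow _ _ (by omega)
    have hmul : g ^ (h / 2) * g ^ ((h - 1) / 2) = g ^ (h - 1) := by
      rw [← pow_add, hab]
    have hgh : g ^ h = g ^ (h - 1) * g := by
      rw [← pow_succ]; congr 1; omega
    have ht : 1 ≤ g ^ (h - 1) := Nat.one_le_pow _ _ (by omega)
    -- LHS ≤ 2 * g^(h-1)
    have hL : (g ^ h - 1) / (g - 1) ≤ 2 * g ^ (h - 1) := by
      have key : g ^ h - 1 ≤ 2 * g ^ (h - 1) * (g - 1) := by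
        have h2t : g ^ (h - 1) * 2 ≤ g ^ (h - 1) * g := Nat.mul_le_mul_left _ hg
        rw [hgh]
        zify [ht, hg, show 1 ≤ g ^ (h-1) * g from by nlinarith, show 1 ≤ g by omega]
        nlinarith [h2t]
      calc (g ^ h - 1) / (g - 1) ≤ 2 * g ^ (h - 1) * (g - 1) / (g - 1) :=
            Nat.div_le_div_right key
      _ = 2 * g ^ (h - 1) := Nat.mul_div_cancel _ (by omega)
    refine hL.trans ?_
    -- RHS ≥ 2 * g^(h-1)
    set x := g ^ (h / 2) with hxdef
    set y := g ^ ((h - 1) / 2) with hydef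
    have hx2 : 2 ≤ x := le_trans hg hx
    zify [show 1 ≤ x + y by omega] at *
    nlinarith [hmul, hx2, hy]
end
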